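/- Let K be a cochain complex of abelian groups with a finite decreasing filtration by subcomplexes K = F^0 K ⊇ F^1 K ⊇ ⋯ ⊇ F^{d+1} K = 0, compatible with the differential. Assume that for every p with 0 ≤ p ≤ d, the quotient complex F^p K / F^{p+1} K has cohomology concentrated in degree p, i.e. H^i(F^pK/F^{p+1}K) = 0 for all i ≠ p. Define D^p = H^p(F^pK/F^{p+1}K) and let d_D : D^p → D^{p+1} be the composite of the connecting homomorphism H^p(F^pK/F^{p+1}K) → H^{p+1}(F^{p+1}K) of the short exact sequence 0 → F^{p+1}K → F^pK → F^pK/F^{p+1}K → 0 with the map H^{p+1}(F^{p+1}K) → H^{p+1}(F^{p+1}K/F^{p+2}K). Then (D^•, d_D) is a cochain complex and there are isomorphisms H^n(K) ≅ H^n(D^•) for all n. -/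

import Mathlib

section

variable {A : ℤ → Type*} [∀ n, AddCommGroup (A n)]

/-- Transport along an equality of degrees. -/
def cst {m n : ℤ} (h : m = n) : A m →+ A n := by subst h; exact AddMonoidHom.id _

/-- The `n`-th cohomology group of a `ℤ`-indexed cochain complex of abelian
groups: cocycles in degree `n` modulo coboundaries from degree `n-1`. -/
abbrev coh (d : ∀ n : ℤ, A n →+ A (n + 1)) (n : ℤ) :=
  (d n).ker ⧸
    (((d (n - 1)).range.map (cst (show n - 1 + 1 = n by omega))).addSubgroupOf (d n).ker)

variable (d : ∀ n : ℤ, A n →+ A (n + 1)) (F : ℤ → ∀ n : ℤ, AddSubgroup (A n))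

/-- Relative cocycles: `x ∈ F^p K^p` with `d x ∈ F^{p+1} K^{p+1}`, i.e. the
elements of `F^p K^p` whose class in `F^pK/F^{p+1}K` is a degree-`p` cocycle. -/
abbrev Zgp (p : ℤ) : AddSubgroup (A p) :=
  F p p ⊓ (F (p + 1) (p + 1)).comap (d p)

/-- Relative coboundaries: `F^{p+1}K^p + d(F^p K^{p-1})`. -/
abbrev Ngp (p : ℤ) : AddSubgroup (A p) :=
  F (p + 1) p ⊔ (F p (p - 1)).map ((cst (show p - 1 + 1 = p by omega)).comp (d (p - 1)))

/-- `D^p = H^p(F^pK/F^{p+1}K)`, realized as relative cocycles modulo relative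
coboundaries. -/
abbrev Dgp (p : ℤ) := Zgp d F p ⧸ ((Ngp d F p).addSubgroupOf (Zgp d F p))

/-- The differential on relative cocycles, induced by `d`. -/
def zmap (hdd : ∀ (n : ℤ) (x : A n), d (n + 1) (d n x) = 0) (p : ℤ) :
    Zgp d F p →+ Zgp d F (p + 1) where
  toFun x :=
    ⟨d p (x : A p),
      AddSubgroup.mem_inf.mpr
        ⟨(AddSubgroup.mem_inf.mp x.2).2,
          AddSubgroup.mem_comap.mpr (by rw [hdd p (x : A p)]; exact zero_mem _)⟩⟩
  map_zero' := by ext; simp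
  map_add' a b := by ext; simp

/-- The differential `d_D : D^p → D^{p+1}`, i.e. the composite of the connecting
homomorphism of `0 → F^{p+1}K → F^pK → F^pK/F^{p+1}K → 0` with the projection
`H^{p+1}(F^{p+1}K) → H^{p+1}(F^{p+1}K/F^{p+2}K)`; on relative cocycles it is
induced by `x ↦ d x`. -/
def dD (hdd : ∀ (n : ℤ) (x : A n), d (n + 1) (d n x) = 0) (p : ℤ) :
    Dgp d F p →+ Dgp d F (p + 1) :=
  QuotientAddGroup.map _ _ (zmap d F hdd p) (by
    intro x hx
    have hx' : (x : A p) ∈ Ngp d F p := hx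
    rw [AddSubgroup.mem_comap, AddSubgroup.mem_addSubgroupOf]
    show d p (x : A p) ∈ Ngp d F (p + 1)
    rcases AddSubgroup.mem_sup.mp hx' with ⟨y, hy, z, hz, hyz⟩
    rcases AddSubgroup.mem_map.mp hz with ⟨w, hw, hwz⟩
    have hdz : d p z = 0 := by
      rw [← hwz]
      show d p ((cst (show p - 1 + 1 = p by omega)) (d (p - 1) w)) = 0
      have key : ∀ (m : ℤ) (h : m = p) (v : A m) (h' : m + 1 = p + 1),
          d p (cst h v) = cst h' (d m v) := by
        rintro m rfl v h'
        rfl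
      rw [key (p - 1 + 1) _ (d (p - 1) w) (by omega), hdd]
      simp [cst]
    have hdy : d p y ∈
        (F (p + 1) (p + 1 - 1)).map
          ((cst (show p + 1 - 1 + 1 = p + 1 by omega)).comp (d (p + 1 - 1))) := by
      have key : ∀ (m : ℤ) (hm : m = p) (hm' : m + 1 = p + 1),
          d p y ∈ (F (p + 1) m).map ((cst hm').comp (d m)) := by
        rintro m rfl hm'
        exact AddSubgroup.mem_map.mpr ⟨y, hy, rfl⟩
      exact key (p + 1 - 1) (by omega) (by omega)
    rw [← hyz, map_add, hdz, add_zero]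
    exact AddSubgroup.mem_sup.mpr ⟨0, zero_mem _, d p y, hdy, zero_add _⟩)

end


section aux

variable {K : ℤ → Type*} [∀ n, AddCommGroup (K n)]
    {d : ∀ n : ℤ, K n →+ K (n + 1)}
    {F : ℤ → ∀ n : ℤ, AddSubgroup (K n)}
    {N : ℕ}

/-- Conciseness abbreviations for the hypotheses of `stmt7`. -/
def Hdd (d : ∀ n : ℤ, K n →+ K (n + 1)) : Prop := ∀ (n : ℤ) (x : K n), d (n + 1) (d n x) = 0

lemma mem_cst {a b : ℤ} (h : a = b) (p : ℤ) (x : K a) :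
    cst h x ∈ F p b ↔ x ∈ F p a := by subst h; exact Iff.rfl

lemma dcst0 (hdd : Hdd d) {a b : ℤ} (h : a + 1 = b) (w : K a) :
    d b (cst h (d a w)) = 0 := by subst h; exact hdd a w

lemma Fcongr (F : ℤ → ∀ n : ℤ, AddSubgroup (K n)) {p q : ℤ} (h : p = q) (n : ℤ) :
    F p n = F q n := by rw [h]

lemma Fmono (hmono : ∀ p n : ℤ, F (p + 1) n ≤ F p n) {p q : ℤ} (hpq : p ≤ q) (n : ℤ) :
    F q n ≤ F p n :=
  Int.le_induction (motive := fun q _ => F q n ≤ F p n) le_rfl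
    (fun q _ ih => le_trans (hmono q n) ih) q hpq

lemma Fbot (hmono : ∀ p n : ℤ, F (p + 1) n ≤ F p n)
    (hFtop : ∀ n : ℤ, F ((N : ℤ) + 1) n = ⊥)
    {p : ℤ} (hp : (N : ℤ) + 1 ≤ p) {n : ℤ} {x : K n} (hx : x ∈ F p n) : x = 0 := by
  have h2 := Fmono hmono hp n hx
  rw [hFtop n] at h2
  simpa using h2

variable (hdd : Hdd d)
    (hmono : ∀ p n : ℤ, F (p + 1) n ≤ F p n)
    (hF0 : ∀ n : ℤ, F 0 n = ⊤) (hFtop : ∀ n : ℤ, F ((N : ℤ) + 1) n = ⊥)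
    (hconc : ∀ p i : ℤ, 0 ≤ p → p ≤ (N : ℤ) → i ≠ p →
      ∀ x : K i, x ∈ F p i → d i x ∈ F (p + 1) (i + 1) →
        ∃ y ∈ F p (i - 1), ∃ z ∈ F (p + 1) i,
          x = cst (show i - 1 + 1 = i by omega) (d (i - 1) y) + z)

include hdd hconc in
lemma hconcZ {p i : ℤ} (hp0 : 0 ≤ p) (hpN : p ≤ (N : ℤ)) (hne : i ≠ p) (x : K i)
    (hx : x ∈ F p i) (hdx : d i x ∈ F (p + 1) (i + 1)) :
    ∃ z ∈ F (p + 1) i, d i z = d i x := by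
  obtain ⟨y, hy, z, hz, hxe⟩ := hconc p i hp0 hpN hne x hx hdx
  exact ⟨z, hz, by rw [hxe, map_add, dcst0 hdd _ y, zero_add]⟩

include hdd hmono hFtop hconc in
lemma L6 : ∀ (k : ℕ) (p n : ℤ), 0 ≤ p → (∀ j : ℕ, j < k → p + (j : ℤ) ≠ n) →
    ∀ y ∈ F p n, d n y ∈ F (p + (k : ℤ)) (n + 1) →
      ∃ z ∈ F (p + (k : ℤ)) n, d n z = d n y := by
  intro k
  induction k with
  | zero =>
    intro p n _ _ y hy _
    exact ⟨y, by simpa using hy, rfl⟩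
  | succ k ih =>
    intro p n hp0 hj y hy hdy
    by_cases hpN : p ≤ (N : ℤ)
    · have hne : n ≠ p := fun h => hj 0 (Nat.succ_pos k) (by omega)
      obtain ⟨z₁, hz₁, hdz₁⟩ := hconcZ hdd hconc hp0 hpN hne y hy
        (Fmono hmono (by push_cast; omega) (n + 1) hdy)
      have hcast : p + 1 + (k : ℤ) = p + ((k + 1 : ℕ) : ℤ) := by push_cast; omega
      obtain ⟨z, hz, hdz⟩ := ih (p + 1) n (by omega)
        (fun j hjk => by
          have := hj (j + 1) (by omega)
          push_cast at this ⊢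
          omega)
        z₁ hz₁ (by rw [hdz₁, Fcongr F hcast (n+1)]; exact hdy)
      rw [Fcongr F hcast n] at hz
      exact ⟨z, hz, hdz.trans hdz₁⟩
    · have hy0 : y = 0 := Fbot hmono hFtop (by omega) hy
      exact ⟨0, zero_mem _, by rw [hy0]⟩

include hdd hmono hFtop hconc in
lemma L5 : ∀ (k : ℕ) (p n : ℤ), 0 ≤ p → (∀ j : ℕ, j < k → p + (j : ℤ) ≠ n) →
    ∀ x ∈ F p n, d n x = 0 →
      ∃ y ∈ F p (n - 1),
        x - cst (show n - 1 + 1 = n by omega) (d (n - 1) y) ∈ F (p + (k : ℤ)) n := by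
  intro k
  induction k with
  | zero =>
    intro p n _ _ x hx _
    refine ⟨0, zero_mem _, ?_⟩
    simpa using hx
  | succ k ih =>
    intro p n hp0 hj x hx hdx
    by_cases hpN : p ≤ (N : ℤ)
    · have hne : n ≠ p := fun h => hj 0 (Nat.succ_pos k) (by omega)
      obtain ⟨y, hy, z, hz, hxe0⟩ := hconc p n hp0 hpN hne x hx
        (by rw [hdx]; exact zero_mem _)
      have hxe : x = cst (show n - 1 + 1 = n by omega) (d (n - 1) y) + z := hxe0
      have hdz : d n z = 0 := by
        have h1 := congrArg (d n) hxe
        rw [map_add, dcst0 hdd _ y, zero_add, hdx] at h1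
        exact h1.symm
      obtain ⟨w, hw, hzw⟩ := ih (p + 1) n (by omega)
        (fun j hjk => by
          have := hj (j + 1) (by omega)
          push_cast at this ⊢
          omega)
        z hz hdz
      refine ⟨y + w, add_mem hy (hmono p (n - 1) hw), ?_⟩
      have heq : x - cst (show n - 1 + 1 = n by omega) (d (n - 1) (y + w))
          = z - cst (show n - 1 + 1 = n by omega) (d (n - 1) w) := by
        rw [map_add, map_add, hxe]
        abel
      rw [heq]
      have hcast : p + 1 + (k : ℤ) = p + ((k + 1 : ℕ) : ℤ) := by push_cast; omega
      rwa [Fcongr F hcast n] at hzw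
    · have hx0 : x = 0 := Fbot hmono hFtop (by omega) hx
      refine ⟨0, zero_mem _, ?_⟩
      rw [hx0]
      simpa using zero_mem _

include hdd hmono hFtop hconc in
lemma L4 : ∀ (k : ℕ) (p n : ℤ), 0 ≤ p → (N : ℤ) + 1 ≤ p + (k : ℤ) → n < p →
    ∀ x ∈ F p n, d n x = 0 →
      ∃ y ∈ F p (n - 1), cst (show n - 1 + 1 = n by omega) (d (n - 1) y) = x := by
  intro k
  induction k with
  | zero =>
    intro p n _ hN _ x hx _
    refine ⟨0, zero_mem _, ?_⟩
    rw [map_zero, map_zero]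
    exact (Fbot hmono hFtop (by omega) hx).symm
  | succ k ih =>
    intro p n hp0 hN hnp x hx hdx
    by_cases hpN : p ≤ (N : ℤ)
    · obtain ⟨y, hy, z, hz, hxe0⟩ := hconc p n hp0 hpN (by omega) x hx
        (by rw [hdx]; exact zero_mem _)
      have hxe : x = cst (show n - 1 + 1 = n by omega) (d (n - 1) y) + z := hxe0
      have hdz : d n z = 0 := by
        have h1 := congrArg (d n) hxe
        rw [map_add, dcst0 hdd _ y, zero_add, hdx] at h1
        exact h1.symm
      obtain ⟨w, hw, hwz⟩ := ih (p + 1) n (by omega) (by push_cast at hN ⊢; omega)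
        (by omega) z hz hdz
      refine ⟨y + w, add_mem hy (hmono p (n - 1) hw), ?_⟩
      rw [map_add, map_add, hwz]
      exact hxe.symm
    · refine ⟨0, zero_mem _, ?_⟩
      rw [map_zero, map_zero]
      exact (Fbot hmono hFtop (by omega) hx).symm

include hdd hmono hF0 hFtop hconc in
/-- Any cocycle lying in `F^p K^n` with `n < p` is the coboundary of an element
of `F^p K^{n-1}`. -/
lemma L4' (p n : ℤ) (hnp : n < p) (x : K n) (hx : x ∈ F p n) (hdx : d n x = 0) :
    ∃ y ∈ F p (n - 1), cst (show n - 1 + 1 = n by omega) (d (n - 1) y) = x := by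
  set q : ℤ := max p 0 with hq
  have hxq : x ∈ F q n := by
    rcases le_total p 0 with h | h
    · have hq0 : q = 0 := by omega
      rw [Fcongr F hq0 n, hF0]
      trivial
    · have hqp : q = p := by omega
      rwa [Fcongr F hqp n]
  obtain ⟨y, hy, hyx⟩ := L4 hdd hmono hFtop hconc ((N + 1 - q).toNat) q n
    (by omega) (by omega) (by omega) x hxq hdx
  exact ⟨y, Fmono hmono (by omega) (n - 1) hy, hyx⟩

lemma cst_mk_eq (d : ∀ n : ℤ, K n →+ K (n + 1)) (F : ℤ → ∀ n : ℤ, AddSubgroup (K n))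
    {a b : ℤ} (h : a = b) (ξ : Zgp d F a) (η : Zgp d F b)
    (hval : cst h (ξ : K a) = (η : K b)) :
    cst (A := fun m => Dgp d F m) h (QuotientAddGroup.mk ξ) = QuotientAddGroup.mk η := by
  subst h
  have hxe : ξ = η := Subtype.ext hval
  rw [hxe]
  rfl

end aux

/-- Degeneration of the spectral sequence of a finitely filtered complex whose
graded pieces have cohomology concentrated on the diagonal: `(D^•, d_D)` is a
cochain complex and `H^n(K) ≅ H^n(D^•)` for all `n`. -/
theorem stmt7 (K : ℤ → Type*) [∀ n, AddCommGroup (K n)]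
    (d : ∀ n : ℤ, K n →+ K (n + 1))
    (hdd : ∀ (n : ℤ) (x : K n), d (n + 1) (d n x) = 0)
    (F : ℤ → ∀ n : ℤ, AddSubgroup (K n))
    (hmono : ∀ p n : ℤ, F (p + 1) n ≤ F p n)
    (hcompat : ∀ (p n : ℤ) (x : K n), x ∈ F p n → d n x ∈ F p (n + 1))
    (N : ℕ)
    (hF0 : ∀ n : ℤ, F 0 n = ⊤) (hFtop : ∀ n : ℤ, F ((N : ℤ) + 1) n = ⊥)
    -- `H^i(F^pK/F^{p+1}K) = 0` for `i ≠ p`: every relative cocycle of degree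
    -- `i ≠ p` is a relative coboundary
    (hconc : ∀ p i : ℤ, 0 ≤ p → p ≤ (N : ℤ) → i ≠ p →
      ∀ x : K i, x ∈ F p i → d i x ∈ F (p + 1) (i + 1) →
        ∃ y ∈ F p (i - 1), ∃ z ∈ F (p + 1) i,
          x = cst (show i - 1 + 1 = i by omega) (d (i - 1) y) + z) :
    (∀ (p : ℤ) (x : Dgp d F p), dD d F hdd (p + 1) (dD d F hdd p x) = 0) ∧
    (∀ n : ℤ, Nonempty (coh d n ≃+ coh (dD d F hdd) n)) := by
  constructor
  · intro p x
    refine QuotientAddGroup.induction_on x (fun ξ => ?_)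
    show dD d F hdd (p + 1) (dD d F hdd p (QuotientAddGroup.mk ξ)) = 0
    rw [dD, dD, QuotientAddGroup.map_mk, QuotientAddGroup.map_mk]
    have hz : zmap d F hdd (p + 1) (zmap d F hdd p ξ) = 0 :=
      Subtype.ext (hdd p (ξ : K p))
    rw [hz, QuotientAddGroup.mk_zero]
  · intro n
    have hn : n - 1 + 1 = n := by omega
    -- `S` is the group of (absolute) cocycles lying in `FⁿKⁿ`.
    set S : AddSubgroup (K n) := F n n ⊓ (d n).ker with hSdef
    have hSker : S ≤ (d n).ker := inf_le_right
    have hSZ : S ≤ Zgp d F n := by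
      intro x hx
      obtain ⟨h1, h2⟩ := AddSubgroup.mem_inf.mp hx
      refine AddSubgroup.mem_inf.mpr ⟨h1, AddSubgroup.mem_comap.mpr ?_⟩
      rw [show d n x = 0 from AddMonoidHom.mem_ker.mp h2]
      exact zero_mem _
    have hSd : ∀ x : S, d n (x : K n) = 0 :=
      fun x => AddMonoidHom.mem_ker.mp ((AddSubgroup.mem_inf.mp x.2).2)
    -- the two comparison maps out of S
    let Φ₁ : S →+ coh d n :=
      (QuotientAddGroup.mk' _).comp (AddSubgroup.inclusion hSker)
    let Ψ : S →+ Dgp d F n :=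
      (QuotientAddGroup.mk' _).comp (AddSubgroup.inclusion hSZ)
    have hΨmem : ∀ x : S, Ψ x ∈ (dD d F hdd n).ker := by
      intro x
      refine AddMonoidHom.mem_ker.mpr ?_
      show dD d F hdd n (QuotientAddGroup.mk (AddSubgroup.inclusion hSZ x)) = 0
      have h0 : zmap d F hdd n (AddSubgroup.inclusion hSZ x) = 0 :=
        Subtype.ext (hSd x)
      rw [dD, QuotientAddGroup.map_mk, h0, QuotientAddGroup.mk_zero]
    let Ψ' : S →+ (dD d F hdd n).ker := AddMonoidHom.codRestrict Ψ _ hΨmem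
    let Φ₂ : S →+ coh (dD d F hdd) n := (QuotientAddGroup.mk' _).comp Ψ'
    -- kernel characterizations
    have hker1 : ∀ x : S, (Φ₁ x = 0 ↔
        (x : K n) ∈ (d (n - 1)).range.map (cst (A := K) hn)) :=
      fun x => Iff.trans (QuotientAddGroup.eq_zero_iff _) AddSubgroup.mem_addSubgroupOf
    have hker2 : ∀ x : S, (Φ₂ x = 0 ↔
        (QuotientAddGroup.mk (⟨(x : K n), hSZ x.2⟩ : Zgp d F n) : Dgp d F n) ∈
          (dD d F hdd (n - 1)).range.map (cst (A := fun m => Dgp d F m) hn)) :=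
      fun x => Iff.trans (QuotientAddGroup.eq_zero_iff _) AddSubgroup.mem_addSubgroupOf
    -- the bridge between the two kernels
    have bridge : ∀ (x : K n) (hxZ : x ∈ Zgp d F n), d n x = 0 →
        (x ∈ (d (n - 1)).range.map (cst (A := K) hn) ↔
          (QuotientAddGroup.mk (⟨x, hxZ⟩ : Zgp d F n) : Dgp d F n) ∈
            (dD d F hdd (n - 1)).range.map (cst (A := fun m => Dgp d F m) hn)) := by
      intro x hxZ hdx
      constructor
      · intro hmem
        obtain ⟨c, hc, hcx⟩ := AddSubgroup.mem_map.mp hmem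
        obtain ⟨y₀, rfl⟩ := AddMonoidHom.mem_range.mp hc
        -- hcx : cst hn (d (n-1) y₀) = x
        have hxF : x ∈ F n n := (AddSubgroup.mem_inf.mp hxZ).1
        have hdy₀n : d (n - 1) y₀ ∈ F n (n - 1 + 1) :=
          (mem_cst hn n _).mp (by rw [hcx]; exact hxF)
        have hy₀F : y₀ ∈ F 0 (n - 1) := by rw [hF0]; trivial
        have hdy₀k : d (n - 1) y₀ ∈ F (0 + (((n - 1).toNat : ℕ) : ℤ)) (n - 1 + 1) := by
          rcases le_or_gt 1 n with h | h
          · exact Fmono hmono (by omega) _ hdy₀n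
          · rw [Fcongr F (show (0 + (((n - 1).toNat : ℕ) : ℤ)) = 0 by omega) _, hF0]
            trivial
        obtain ⟨z, hzF, hdz⟩ := L6 hdd hmono hFtop hconc (n - 1).toNat 0 (n - 1) le_rfl
          (fun j hj => by omega) y₀ hy₀F hdy₀k
        have hzF' : z ∈ F (n - 1) (n - 1) := Fmono hmono (by omega) _ hzF
        have hdzn : d (n - 1) z ∈ F (n - 1 + 1) (n - 1 + 1) := by
          rw [Fcongr F hn (n - 1 + 1), hdz]
          exact hdy₀n
        have hzZ : z ∈ Zgp d F (n - 1) :=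
          AddSubgroup.mem_inf.mpr ⟨hzF', AddSubgroup.mem_comap.mpr hdzn⟩
        refine AddSubgroup.mem_map.mpr
          ⟨dD d F hdd (n - 1) (QuotientAddGroup.mk ⟨z, hzZ⟩),
            AddMonoidHom.mem_range.mpr ⟨_, rfl⟩, ?_⟩
        rw [dD, QuotientAddGroup.map_mk]
        refine cst_mk_eq d F hn _ _ ?_
        show cst (A := K) hn (d (n - 1) z) = x
        rw [hdz]
        exact hcx
      · intro hmem
        obtain ⟨ζ, hζ, hζx⟩ := AddSubgroup.mem_map.mp hmem
        obtain ⟨ζ₀, rfl⟩ := AddMonoidHom.mem_range.mp hζ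
        obtain ⟨zz, rfl⟩ := QuotientAddGroup.mk_surjective ζ₀
        rw [dD, QuotientAddGroup.map_mk] at hζx
        have hη : cst (A := K) hn (d (n - 1) (zz : K (n - 1))) ∈ Zgp d F n := by
          refine AddSubgroup.mem_inf.mpr ⟨?_, AddSubgroup.mem_comap.mpr ?_⟩
          · refine (mem_cst hn n _).mpr ?_
            have h2 := AddSubgroup.mem_comap.mp (AddSubgroup.mem_inf.mp zz.2).2
            rwa [Fcongr F hn (n - 1 + 1)] at h2
          · have h0 : d n (cst (A := K) hn (d (n - 1) (zz : K (n - 1)))) = 0 :=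
              dcst0 hdd hn _
            rw [h0]
            exact zero_mem _
        have hmk : (QuotientAddGroup.mk (⟨_, hη⟩ : Zgp d F n) : Dgp d F n)
            = QuotientAddGroup.mk (⟨x, hxZ⟩ : Zgp d F n) := by
          rw [← cst_mk_eq d F hn (zmap d F hdd (n - 1) zz) ⟨_, hη⟩ rfl]
          exact hζx
        have hdiff : x - cst (A := K) hn (d (n - 1) (zz : K (n - 1))) ∈ Ngp d F n := by
          have h1 := (QuotientAddGroup.eq_iff_sub_mem).mp hmk.symm
          exact AddSubgroup.mem_addSubgroupOf.mp h1
        obtain ⟨v, hv, b, hb, hvb⟩ := AddSubgroup.mem_sup.mp hdiff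
        obtain ⟨u, hu, rfl⟩ := AddSubgroup.mem_map.mp hb
        have hvb' : v + cst (A := K) hn (d (n - 1) u)
            = x - cst (A := K) hn (d (n - 1) (zz : K (n - 1))) := hvb
        have hdv : d n v = 0 := by
          have h1 := congrArg (d n) hvb'
          rw [map_add, map_sub, dcst0 hdd hn, dcst0 hdd hn, hdx] at h1
          simpa using h1
        obtain ⟨w₂, hw₂, hw₂eq⟩ := L4' hdd hmono hF0 hFtop hconc (n + 1) n
          (by omega) v hv hdv
        have hw₂eq' : cst (A := K) hn (d (n - 1) w₂) = v := hw₂eq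
        refine AddSubgroup.mem_map.mpr
          ⟨d (n - 1) ((zz : K (n - 1)) + u + w₂), AddMonoidHom.mem_range.mpr ⟨_, rfl⟩, ?_⟩
        show cst (A := K) hn (d (n - 1) ((zz : K (n - 1)) + u + w₂)) = x
        rw [map_add, map_add, map_add, map_add, hw₂eq']
        have hx2 : x = cst (A := K) hn (d (n - 1) (zz : K (n - 1)))
            + (v + cst (A := K) hn (d (n - 1) u)) := by
          rw [hvb']
          abel
        rw [hx2]
        abel
    -- equality of kernels
    have hkerEq : Φ₁.ker = Φ₂.ker := by
      ext x
      rw [AddMonoidHom.mem_ker, AddMonoidHom.mem_ker, hker1 x, hker2 x]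
      exact bridge (x : K n) (hSZ x.2) (hSd x)
    -- surjectivity of Φ₁
    have hsurj1 : Function.Surjective Φ₁ := by
      intro c
      obtain ⟨⟨x, hxker⟩, rfl⟩ := QuotientAddGroup.mk'_surjective _ c
      have hdx : d n x = 0 := AddMonoidHom.mem_ker.mp hxker
      have hx0 : x ∈ F 0 n := by rw [hF0]; trivial
      obtain ⟨y, hy, hmem0⟩ := L5 hdd hmono hFtop hconc n.toNat 0 n le_rfl
        (fun j hj => by omega) x hx0 hdx
      have hmem : x - cst (A := K) hn (d (n - 1) y) ∈ F (0 + ((n.toNat : ℕ) : ℤ)) n := hmem0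
      set x' : K n := x - cst (A := K) hn (d (n - 1) y) with hx'
      have hx'F : x' ∈ F n n := Fmono hmono (by omega) n hmem
      have hdx' : d n x' = 0 := by
        rw [hx', map_sub, hdx, dcst0 hdd hn, sub_zero]
      have hx'S : x' ∈ S :=
        AddSubgroup.mem_inf.mpr ⟨hx'F, AddMonoidHom.mem_ker.mpr hdx'⟩
      refine ⟨⟨x', hx'S⟩, ?_⟩
      apply (QuotientAddGroup.eq_iff_sub_mem).mpr
      apply AddSubgroup.mem_addSubgroupOf.mpr
      show x' - x ∈ _
      have hxx : x' - x = -(cst (A := K) hn (d (n - 1) y)) := by rw [hx']; abel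
      rw [hxx]
      exact neg_mem (AddSubgroup.mem_map.mpr
        ⟨d (n - 1) y, AddMonoidHom.mem_range.mpr ⟨y, rfl⟩, rfl⟩)
    -- surjectivity of Φ₂
    have hsurj2 : Function.Surjective Φ₂ := by
      intro c
      obtain ⟨⟨ξ, hξ⟩, rfl⟩ := QuotientAddGroup.mk'_surjective _ c
      obtain ⟨x0, rfl⟩ := QuotientAddGroup.mk_surjective ξ
      have hmem : d n (x0 : K n) ∈ Ngp d F (n + 1) := by
        have h1 : dD d F hdd n (QuotientAddGroup.mk x0) = 0 := AddMonoidHom.mem_ker.mp hξ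
        rw [dD, QuotientAddGroup.map_mk] at h1
        exact AddSubgroup.mem_addSubgroupOf.mp ((QuotientAddGroup.eq_zero_iff _).mp h1)
      obtain ⟨v, hv, b, hb, hvb⟩ := AddSubgroup.mem_sup.mp hmem
      obtain ⟨u₀, hu₀, rfl⟩ := AddSubgroup.mem_map.mp hb
      have key : ∀ (j : ℤ) (hj : j = n) (h' : j + 1 = n + 1) (u₀ : K j), u₀ ∈ F (n + 1) j →
          v + cst h' (d j u₀) = d n (x0 : K n) →
          ∃ u : K n, u ∈ F (n + 1) n ∧ v + d n u = d n (x0 : K n) := by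
        intro j hj
        subst hj
        intro h' u₀ hu hvb2
        exact ⟨u₀, hu, hvb2⟩
      obtain ⟨u, huF, hvb'⟩ := key (n + 1 - 1) (by omega) (by omega) u₀ hu₀ hvb
      have hdv : d (n + 1) v = 0 := by
        have h1 := congrArg (d (n + 1)) hvb'
        rw [map_add, hdd n u, hdd n (x0 : K n), add_zero] at h1
        exact h1
      obtain ⟨w₀, hw₀, hw₀eq⟩ := L4' hdd hmono hF0 hFtop hconc (n + 1 + 1) (n + 1)
        (by omega) v hv hdv
      have key2 : ∀ (j : ℤ) (hj : j = n) (h' : j + 1 = n + 1) (w₀ : K j), w₀ ∈ F (n + 1 + 1) j →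
          cst h' (d j w₀) = v → ∃ w : K n, w ∈ F (n + 1 + 1) n ∧ d n w = v := by
        intro j hj
        subst hj
        intro h' w₀ hw hwe
        exact ⟨w₀, hw, hwe⟩
      obtain ⟨w, hwF, hweq⟩ := key2 (n + 1 - 1) (by omega) (by omega) w₀ hw₀ hw₀eq
      set x' : K n := (x0 : K n) - u - w with hx'
      have hx'F : x' ∈ F n n := by
        have h1 : (x0 : K n) ∈ F n n := (AddSubgroup.mem_inf.mp x0.2).1
        exact sub_mem (sub_mem h1 (hmono n n huF)) (Fmono hmono (by omega) n hwF)
      have hdx' : d n x' = 0 := by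
        rw [hx', map_sub, map_sub, ← hvb', hweq]
        abel
      have hx'S : x' ∈ S :=
        AddSubgroup.mem_inf.mpr ⟨hx'F, AddMonoidHom.mem_ker.mpr hdx'⟩
      refine ⟨⟨x', hx'S⟩, ?_⟩
      have hDgp : (QuotientAddGroup.mk (⟨x', hSZ hx'S⟩ : Zgp d F n) : Dgp d F n)
          = QuotientAddGroup.mk x0 := by
        apply (QuotientAddGroup.eq_iff_sub_mem).mpr
        apply AddSubgroup.mem_addSubgroupOf.mpr
        show x' - (x0 : K n) ∈ Ngp d F n
        have hxx : x' - (x0 : K n) = -(u + w) := by rw [hx']; abel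
        rw [hxx]
        exact neg_mem (AddSubgroup.mem_sup_left
          (add_mem huF (Fmono hmono (by omega) n hwF)))
      show QuotientAddGroup.mk' _ (Ψ' ⟨x', hx'S⟩)
          = QuotientAddGroup.mk' _ (⟨QuotientAddGroup.mk x0, hξ⟩ : (dD d F hdd n).ker)
      exact congrArg (QuotientAddGroup.mk' _) (Subtype.ext hDgp)
    -- conclusion
    have e1 := QuotientAddGroup.quotientKerEquivOfSurjective Φ₁ hsurj1
    have e2 := QuotientAddGroup.quotientKerEquivOfSurjective Φ₂ hsurj2
    exact ⟨e1.symm.trans ((QuotientAddGroup.quotientAddEquivOfEq hkerEq).trans e2)⟩
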